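/- arXiv:1302.3906 — 2 statements merged into one kernel-verified Lean document; each statement's English description precedes it below -/
import Mathlib

section
/- Any transformation t of a finite set Q with |im t| = |Q| - 1 can be written as t = α ∘ π, where π is a permutation of Q and α is a singular transformation (a map that sends one element k to some other element ℓ and fixes all other elements). -/
/-!
A transformation `t` with `|im t| = |Q| - 1` identifies exactly one pair of points `a ≠ b`
(`t a = t b`) and misses exactly one point `m`. Redirecting `a` to `m` gives a permutation `π`,
and the singular transformation `(m → t a)` undoes the redirection: `t = (m → t a) ∘ π`.
-/

open Function Finset

theorem Function.injective_update_of_injOn_compl {α β : Type*} [DecidableEq α] {t : α → β}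
    {a : α} {m : β} (ht : Set.InjOn t {a}ᶜ) (hm : m ∉ Set.range t) :
    Injective (update t a m) := by
  intro x y hxy
  by_cases hx : x = a <;> by_cases hy : y = a
  · rw [hx, hy]
  · subst hx
    rw [update_self, update_of_ne hy] at hxy
    exact absurd ⟨y, hxy.symm⟩ hm
  · subst hy
    rw [update_self, update_of_ne hx] at hxy
    exact absurd ⟨x, hxy⟩ hm
  · rw [update_of_ne hx, update_of_ne hy] at hxy
    exact ht hx hy hxy

theorem Function.ite_comp_update_of_notMem_range {α β : Type*} [DecidableEq α] [DecidableEq β]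
    (t : α → β) (a : α) {m : β} (hm : m ∉ Set.range t) :
    (fun y => if y = m then t a else y) ∘ update t a m = t := by
  funext q
  by_cases hq : q = a
  · subst hq
    simp
  · have hqm : t q ≠ m := fun h => hm ⟨q, h⟩
    simp [update_of_ne hq, hqm]

theorem Finset.exists_notMem_range_of_card_image_univ_lt {α β : Type*} [Fintype α] [Fintype β]
    [DecidableEq β] {t : α → β} (h : #(univ.image t) < Fintype.card β) :
    ∃ m, m ∉ Set.range t := by
  by_contra! hsurj
  rw [image_univ_of_surjective hsurj, card_univ] at h
  exact h.false

theorem Finset.exists_injOn_compl_of_card_image_univ_add_one {α β : Type*} [Fintype α]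
    [DecidableEq α] [DecidableEq β] {t : α → β} (h : #(univ.image t) + 1 = Fintype.card α) :
    ∃ a, Set.InjOn t {a}ᶜ := by
  have hnotinj : ¬ Injective t := fun hinj => by
    rw [card_image_of_injective _ hinj, card_univ] at h
    omega
  obtain ⟨a, b, hab, hne⟩ : ∃ a b, t a = t b ∧ a ≠ b := by
    simpa [Injective] using hnotinj
  have himage : (univ.erase a).image t = univ.image t := by
    refine Subset.antisymm (image_subset_image (erase_subset _ _)) fun y hy => ?_
    obtain ⟨x, -, rfl⟩ := mem_image.mp hy
    by_cases hxa : x = a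
    · subst hxa
      exact mem_image.mpr ⟨b, mem_erase.mpr ⟨hne.symm, mem_univ b⟩, hab.symm⟩
    · exact mem_image_of_mem t (mem_erase.mpr ⟨hxa, mem_univ x⟩)
  refine ⟨a, ?_⟩
  have hinj := injOn_of_card_image_eq (s := univ.erase a) (f := t) (by
    rw [himage, card_erase_of_mem (mem_univ a), card_univ]
    omega)
  simpa [Set.compl_eq_univ_sdiff] using hinj

/-- Any transformation `t` of a finite set `Q` with `|im t| = |Q| - 1` can be
written as `t = α ∘ π` with `π` a permutation and `α = (k → ℓ)` a singular
transformation. -/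
theorem exists_singular_comp_perm {Q : Type*} [Fintype Q] [DecidableEq Q]
    (hQ : 2 ≤ Fintype.card Q) (t : Q → Q)
    (ht : (Finset.univ.image t).card = Fintype.card Q - 1) :
    ∃ (π : Equiv.Perm Q) (k ℓ : Q), k ≠ ℓ ∧
      t = (fun q => if q = k then ℓ else q) ∘ ⇑π := by
  obtain ⟨a, hinjOn⟩ := exists_injOn_compl_of_card_image_univ_add_one (t := t) (by omega)
  obtain ⟨m, hm⟩ := exists_notMem_range_of_card_image_univ_lt (t := t) (by omega)
  have hbij : Bijective (update t a m) :=
    Finite.injective_iff_bijective.mp (injective_update_of_injOn_compl hinjOn hm)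
  refine ⟨Equiv.ofBijective _ hbij, m, t a, fun h => hm ⟨a, h.symm⟩, ?_⟩
  exact (ite_comp_update_of_notMem_range t a hm).symm
end

section
/- Let t : Q → Q be a transformation, and let V ⊆ U ⊆ Q be such that every set in the interval [V, U] is a preimage of t. Then the union over all S ∈ [V, U] of the collections {T ⊆ Q | t⁻¹(T) = S} is exactly the interval [t(V), t(U) ∪ coim t]. -/
/-! The fibre of `T` is `t⁻¹(T)`, so `T` belongs to the union iff `V ⊆ t⁻¹(T) ⊆ U`.
The lower bound is `t(V) ⊆ T`. Since `U` is a preimage, `U = t⁻¹(t(U))`, so the upper bound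
reads `t⁻¹(T) ⊆ t⁻¹(t(U))`, which only constrains `T` on `im t`: `T ⊆ t(U) ∪ coim t`. -/

open Set

theorem preimage_subset_preimage_iff_subset_union_compl_range {α β : Type*} (f : α → β)
    (A B : Set β) : f ⁻¹' A ⊆ f ⁻¹' B ↔ A ⊆ B ∪ (univ \ range f) := by
  constructor
  · intro h y hy
    by_cases hy' : y ∈ range f
    · obtain ⟨x, rfl⟩ := hy'
      exact Or.inl (h hy)
    · exact Or.inr ⟨trivial, hy'⟩
  · rintro h x hx
    rcases h hx with hB | ⟨-, hx'⟩
    · exact hB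
    · exact absurd (mem_range_self x) hx'

theorem interval_fibers_eq_interval_general {Q : Type*} (t : Q → Q)
    (V U : Set Q) (hVU : V ⊆ U)
    (hpre : ∀ S : Set Q, V ⊆ S → S ⊆ U → S = t ⁻¹' (t '' S)) :
    {T : Set Q | ∃ S : Set Q, V ⊆ S ∧ S ⊆ U ∧ t ⁻¹' T = S} =
      {T : Set Q | t '' V ⊆ T ∧ T ⊆ t '' U ∪ (Set.univ \ Set.range t)} := by
  ext T
  have hU : U = t ⁻¹' (t '' U) := hpre U hVU subset_rfl
  simp only [mem_ofPred_eq, exists_eq_right_right', image_subset_iff]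
  rw [← preimage_subset_preimage_iff_subset_union_compl_range, ← hU]

/-- If every set in the interval `[V, U]` is a preimage of `t`, then the union
over `S ∈ [V, U]` of the collections `{T | t⁻¹(T) = S}` is exactly the interval
`[t(V), t(U) ∪ coim t]`. -/
theorem interval_fibers_eq_interval {Q : Type*} [Fintype Q] (t : Q → Q)
    (V U : Set Q) (hVU : V ⊆ U)
    (hpre : ∀ S : Set Q, V ⊆ S → S ⊆ U → S = t ⁻¹' (t '' S)) :
    {T : Set Q | ∃ S : Set Q, V ⊆ S ∧ S ⊆ U ∧ t ⁻¹' T = S} =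
      {T : Set Q | t '' V ⊆ T ∧ T ⊆ t '' U ∪ (Set.univ \ Set.range t)} :=
  interval_fibers_eq_interval_general t V U hVU hpre
end
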